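/- Let G be a finite group with norm element N, and (N,2) the left ideal of ℤG generated by N and 2. Then the sequence 0 → ℤG → (N,2) → ℤ/2 → 0 is exact, where the first map is multiplication by 2 and the second map sends N to 1 and 2 to 0. -/

import Mathlib

/-!
Left multiplication by a group element permutes the summands of `N`, so `uN = ε(u)N` for every
`u ∈ ℤG` and `(N, 2) = ℤN + 2ℤG`. The identity coefficient of `kN + 2v` is `k + 2v(1)`; it is even
exactly when `k = 2j`, and then `kN + 2v = 2(jN + v)`. Injectivity of multiplication by `2` is
torsion-freeness of `ℤG`.
-/

open TensorProduct

section SubQuot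
variable {G : Type*} [Group G] {V : Type*} [AddCommGroup V] [Module ℤ V]

/-- The restriction of a representation to an invariant submodule. -/
def subRep (ρ : Representation ℤ G V) (p : Submodule ℤ V)
    (hp : ∀ g : G, ∀ x ∈ p, ρ g x ∈ p) : Representation ℤ G p where
  toFun g := (ρ g).restrict (hp g)
  map_one' := by
    ext x
    simp [LinearMap.restrict_apply]
  map_mul' g h := by
    ext x
    simp [LinearMap.restrict_apply, map_mul]

/-- The representation induced on the quotient by an invariant submodule. -/
noncomputable def quotRep (ρ : Representation ℤ G V) (p : Submodule ℤ V)
    (hp : ∀ g : G, ∀ x ∈ p, ρ g x ∈ p) : Representation ℤ G (V ⧸ p) where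
  toFun g := Submodule.mapQ p p (ρ g) (hp g)
  map_one' := by
    apply LinearMap.ext
    intro x
    obtain ⟨v, rfl⟩ := Submodule.Quotient.mk_surjective p x
    simp [Submodule.mapQ_apply]
  map_mul' g h := by
    apply LinearMap.ext
    intro x
    obtain ⟨v, rfl⟩ := Submodule.Quotient.mk_surjective p x
    simp [Submodule.mapQ_apply, map_mul]

end SubQuot

section GroupRing
variable (G : Type*) [Group G]

/-- The left regular representation of `G` on the group ring `ℤG`. -/
noncomputable def regRep : Representation ℤ G (MonoidAlgebra ℤ G) where
  toFun g := LinearMap.mulLeft ℤ (MonoidAlgebra.of ℤ G g)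
  map_one' := by
    apply LinearMap.ext; intro x
    simp [MonoidAlgebra.of_apply, ← MonoidAlgebra.one_def]
  map_mul' g h := by
    apply LinearMap.ext; intro x
    simp only [MonoidAlgebra.of_apply, LinearMap.mulLeft_apply, Module.End.mul_apply]
    rw [← mul_assoc, MonoidAlgebra.single_mul_single, mul_one]

/-- The augmentation map `ε : ℤG → ℤ`. -/
noncomputable def aug : MonoidAlgebra ℤ G →ₐ[ℤ] ℤ := MonoidAlgebra.lift ℤ ℤ G 1

/-- The augmentation ideal `I = ker(ε : ℤG → ℤ)`. -/
noncomputable def augI : Ideal (MonoidAlgebra ℤ G) := RingHom.ker (aug G).toRingHom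

/-- The mod 2 augmentation map `ℤG → ℤ/2`. -/
noncomputable def aug2 : MonoidAlgebra ℤ G →+* ZMod 2 :=
  (Int.castRingHom (ZMod 2)).comp (aug G).toRingHom

/-- The ideal `(I, 2) = ker(ℤG → ℤ/2)` generated by the augmentation ideal and `2`. -/
noncomputable def I2 : Ideal (MonoidAlgebra ℤ G) := RingHom.ker (aug2 G)

/-- The norm element `N = ∑_{g ∈ G} g ∈ ℤG`. -/
noncomputable def Nelt [Fintype G] : MonoidAlgebra ℤ G := ∑ g : G, MonoidAlgebra.of ℤ G g

/-- The (left) ideal of `ℤG` generated by the norm element `N`; the quotient by it is `ℤG/N`. -/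
noncomputable def NIdeal [Fintype G] : Ideal (MonoidAlgebra ℤ G) := Ideal.span {Nelt G}

/-- The left ideal `(N, 2)` of `ℤG` generated by the norm element `N` and `2`. -/
noncomputable def N2 [Fintype G] : Ideal (MonoidAlgebra ℤ G) := Ideal.span {Nelt G, 2}

lemma aug_single (g : G) : aug G (MonoidAlgebra.single g 1) = 1 := by
  simp [aug, MonoidAlgebra.lift_single]

lemma of_sub_one_mem_augI (g : G) :
    MonoidAlgebra.of ℤ G g - 1 ∈ (augI G).restrictScalars ℤ := by
  simp [augI, RingHom.mem_ker, map_sub, aug_single]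

lemma of_sub_one_mem_I2 (g : G) :
    MonoidAlgebra.of ℤ G g - 1 ∈ (I2 G).restrictScalars ℤ := by
  simp [I2, aug2, RingHom.mem_ker, map_sub, aug_single]

lemma two_mem_I2 : (2 : MonoidAlgebra ℤ G) ∈ (I2 G).restrictScalars ℤ := by
  have : (aug2 G) 2 = 2 := by simp [map_ofNat]
  simp [I2, RingHom.mem_ker, this]
  decide

lemma N_mem_I2 [Fintype G] (h : Even (Fintype.card G)) :
    Nelt G ∈ (I2 G).restrictScalars ℤ := by
  have : (aug2 G) (Nelt G) = (Fintype.card G : ZMod 2) := by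
    simp [Nelt, map_sum, aug2, aug_single]
  simp only [Submodule.restrictScalars_mem, I2, RingHom.mem_ker, this]
  rw [ZMod.natCast_eq_zero_iff]
  exact h.two_dvd

lemma N_mem_N2 [Fintype G] : Nelt G ∈ (N2 G).restrictScalars ℤ :=
  Ideal.subset_span (by simp)

lemma two_mem_N2 [Fintype G] : (2 : MonoidAlgebra ℤ G) ∈ (N2 G).restrictScalars ℤ :=
  Ideal.subset_span (by simp)

lemma ideal_invariant (J : Ideal (MonoidAlgebra ℤ G)) :
    ∀ g : G, ∀ x ∈ J.restrictScalars ℤ, (regRep G) g x ∈ J.restrictScalars ℤ := by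
  intro g x hx
  exact J.mul_mem_left _ hx

/-- A (left) ideal of `ℤG`, regarded as a representation of `G`. -/
noncomputable def idealRep (J : Ideal (MonoidAlgebra ℤ G)) :
    Representation ℤ G ↥(J.restrictScalars ℤ) :=
  subRep (regRep G) (J.restrictScalars ℤ) (ideal_invariant G J)

/-- The quotient `ℤG/N` of `ℤG` by the ideal generated by the norm element, as a
representation of `G`. -/
noncomputable def quotNRep [Fintype G] :
    Representation ℤ G (MonoidAlgebra ℤ G ⧸ (NIdeal G).restrictScalars ℤ) :=
  quotRep (regRep G) ((NIdeal G).restrictScalars ℤ) (ideal_invariant G (NIdeal G))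

/-- `2` as an element of `(I,2)`. -/
noncomputable def twoI2 : ↥((I2 G).restrictScalars ℤ) := ⟨2, two_mem_I2 G⟩

/-- `g - 1` as an element of `(I,2)`. -/
noncomputable def gm1 (g : G) : ↥((I2 G).restrictScalars ℤ) :=
  ⟨MonoidAlgebra.of ℤ G g - 1, of_sub_one_mem_I2 G g⟩

/-- `g - 1` as an element of the augmentation ideal `I`. -/
noncomputable def gm1I (g : G) : ↥((augI G).restrictScalars ℤ) :=
  ⟨MonoidAlgebra.of ℤ G g - 1, of_sub_one_mem_augI G g⟩

/-- The norm element as an element of `(I,2)` (for `G` of even order). -/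
noncomputable def NeltI2 [Fintype G] (h : Even (Fintype.card G)) :
    ↥((I2 G).restrictScalars ℤ) := ⟨Nelt G, N_mem_I2 G h⟩

/-- The norm element as an element of `(N,2)`. -/
noncomputable def NeltN2 [Fintype G] : ↥((N2 G).restrictScalars ℤ) := ⟨Nelt G, N_mem_N2 G⟩

end GroupRing

lemma two_mul_injective_of_isTorsionFree {R : Type*} [Ring R] [Module.IsTorsionFree ℤ R] :
    Function.Injective fun v : R => 2 * v := by
  simpa only [two_mul, ← two_zsmul] using smul_right_injective R (two_ne_zero : (2 : ℤ) ≠ 0)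

lemma MonoidAlgebra.coeff_two_mul {G : Type*} [MulOneClass G] (v : MonoidAlgebra ℤ G) (g : G) :
    (2 * v).coeff g = 2 * v.coeff g := by
  rw [two_mul, MonoidAlgebra.coeff_add, Finsupp.add_apply, two_mul]

section NormElement
variable {G : Type*} [Group G] [Fintype G]

lemma coeff_Nelt (g : G) : (Nelt G).coeff g = 1 := by
  classical
  simp [Nelt, MonoidAlgebra.coeff_sum, Finset.sum_apply', MonoidAlgebra.of_apply,
    MonoidAlgebra.coeff_single, Finsupp.single_apply]

lemma of_mul_Nelt (g : G) : MonoidAlgebra.of ℤ G g * Nelt G = Nelt G := by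
  simp only [Nelt, Finset.mul_sum, ← map_mul]
  exact Fintype.sum_equiv (Equiv.mulLeft g) _ _ fun _ => rfl

lemma mul_Nelt (a : MonoidAlgebra ℤ G) : a * Nelt G = aug G a • Nelt G := by
  induction a using MonoidAlgebra.induction_linear with
  | zero => simp
  | add a b ha hb => rw [add_mul, ha, hb, map_add, add_smul]
  | single g k =>
    have hsingle : MonoidAlgebra.single g k = k • MonoidAlgebra.of ℤ G g := by
      rw [MonoidAlgebra.of_apply, MonoidAlgebra.smul_single', mul_one]
    rw [hsingle, smul_mul_assoc, of_mul_Nelt, map_zsmul, MonoidAlgebra.of_apply, aug_single,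
      smul_eq_mul, mul_one]

-- `uN = ε(u)N`, so the left ideal generated by `N` is just `ℤN`.
lemma mem_N2_iff {μ : MonoidAlgebra ℤ G} :
    μ ∈ N2 G ↔ ∃ (k : ℤ) (v : MonoidAlgebra ℤ G), μ = k • Nelt G + 2 * v := by
  rw [N2, Ideal.span, Submodule.mem_span_pair]
  constructor
  · rintro ⟨u, v, rfl⟩
    exact ⟨aug G u, v, by rw [smul_eq_mul, mul_Nelt, smul_eq_mul, two_mul, mul_two]⟩
  · rintro ⟨k, v, rfl⟩
    refine ⟨k • 1, v, ?_⟩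
    rw [smul_eq_mul, smul_mul_assoc, one_mul, smul_eq_mul, two_mul, mul_two]

lemma coeff_zsmul_Nelt_add_two_mul (k : ℤ) (v : MonoidAlgebra ℤ G) (g : G) :
    (k • Nelt G + 2 * v).coeff g = k + 2 * v.coeff g := by
  rw [MonoidAlgebra.coeff_add, Finsupp.add_apply, MonoidAlgebra.coeff_smul, Finsupp.smul_apply,
    coeff_Nelt, smul_eq_mul, mul_one, MonoidAlgebra.coeff_two_mul]

lemma coeff_one_eq_zero_iff_of_mem_N2 {μ : MonoidAlgebra ℤ G} (hμ : μ ∈ N2 G) :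
    (μ.coeff 1 : ZMod 2) = 0 ↔ ∃ v : MonoidAlgebra ℤ G, μ = 2 * v := by
  constructor
  · obtain ⟨k, v, rfl⟩ := mem_N2_iff.mp hμ
    rw [coeff_zsmul_Nelt_add_two_mul, ZMod.intCast_zmod_eq_zero_iff_dvd, Nat.cast_ofNat,
      dvd_add_left (dvd_mul_right 2 _)]
    rintro ⟨j, rfl⟩
    exact ⟨j • Nelt G + v, by rw [mul_add, two_mul (j • Nelt G), ← add_smul, ← two_mul]⟩
  · rintro ⟨w, rfl⟩
    rw [MonoidAlgebra.coeff_two_mul, Int.cast_mul, Int.cast_ofNat]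
    exact mul_eq_zero_of_left rfl _

end NormElement

/-- For a finite group `G` with norm element `N` and `(N,2)` the left ideal of
`ℤG` generated by `N` and `2`, the sequence `0 → ℤG → (N,2) → ℤ/2 → 0` is exact, where the
first map is multiplication by `2` and the second map (which sends `μ` to its coefficient at
the identity, mod `2`) sends `N` to `1` and `2` to `0`. -/
theorem stmt12 {G : Type*} [Group G] [Fintype G] :
    -- multiplication by 2 lands in (N,2)
    (∀ v : MonoidAlgebra ℤ G, 2 * v ∈ N2 G) ∧
    -- multiplication by 2 is injective
    (Function.Injective fun v : MonoidAlgebra ℤ G => 2 * v) ∧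
    -- the second map sends N to 1 and 2 to 0
    (((Nelt G).coeff 1 : ZMod 2) = 1 ∧ (((2 : MonoidAlgebra ℤ G)).coeff 1 : ZMod 2) = 0) ∧
    -- exactness at (N,2)
    (∀ μ ∈ N2 G, ((μ.coeff 1 : ZMod 2) = 0 ↔ ∃ v : MonoidAlgebra ℤ G, μ = 2 * v)) ∧
    -- surjectivity onto ℤ/2
    (∀ c : ZMod 2, ∃ μ ∈ N2 G, (μ.coeff 1 : ZMod 2) = c) := by
  refine ⟨fun v => mem_N2_iff.mpr ⟨0, v, by rw [zero_smul, zero_add]⟩,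
    two_mul_injective_of_isTorsionFree, ⟨?_, ?_⟩, fun μ => coeff_one_eq_zero_iff_of_mem_N2, ?_⟩
  · rw [coeff_Nelt, Int.cast_one]
  · rw [MonoidAlgebra.coeff_ofNat, Finsupp.single_eq_same]
    rfl
  · intro c
    obtain ⟨k, rfl⟩ := ZMod.intCast_surjective c
    refine ⟨k • Nelt G, mem_N2_iff.mpr ⟨k, 0, by rw [mul_zero, add_zero]⟩, ?_⟩
    rw [MonoidAlgebra.coeff_smul, Finsupp.smul_apply, coeff_Nelt, smul_eq_mul, mul_one]
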